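/- Let a, b, q be indeterminates and n a positive integer, and t ∈ {1,2}. Then in ℚ(a,b)[q], the polynomial (a-b)(1-ab) - (1-bq^{tn})(b-q^{tn})(-1-a²+aq^{tn}) is divisible by (1-aq^{tn})(a-q^{tn}). -/
import Mathlib


open Polynomial

/-- The field `ℚ(a,b)` of rational functions in two variables. -/
noncomputable abbrev Kab : Type := FractionRing (MvPolynomial (Fin 2) ℚ)

noncomputable def aa : Kab := algebraMap (MvPolynomial (Fin 2) ℚ) Kab (MvPolynomial.X 0)
noncomputable def bb : Kab := algebraMap (MvPolynomial (Fin 2) ℚ) Kab (MvPolynomial.X 1)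

/-- Congruence relation (1.4): in `ℚ(a,b)[q]` with `t ∈ {1,2}`, the polynomial
`(a-b)(1-ab) - (1-bq^{tn})(b-q^{tn})(-1-a²+aq^{tn})` is divisible by
`(1-aq^{tn})(a-q^{tn})`. -/
theorem stmt_6 (n t : ℕ) (hn : 0 < n) (ht : t = 1 ∨ t = 2) :
    (1 - C aa * X ^ (t * n)) * (C aa - X ^ (t * n)) ∣
      C ((aa - bb) * (1 - aa * bb))
        - (1 - C bb * X ^ (t * n)) * (C bb - X ^ (t * n))
          * (C (-1 - aa ^ 2) + C aa * X ^ (t * n)) := by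
  refine ⟨C (1 + bb ^ 2) - C bb * X ^ (t * n), ?_⟩
  simp only [map_mul, map_sub, map_add, map_one, map_neg, map_pow, map_ofNat]
  ring
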